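/- arXiv:2205.02556 — 2 statements merged into one kernel-verified Lean document; each statement's English description precedes it below -/
import Mathlib

section
/- Let d ≥ 1 and let L be the differential operator (I - ∂/∂x_1)···(I - ∂/∂x_d). Then L applied to the Vandermonde determinant Δ(x_1,...,x_d) = ∏_{1 ≤ i < j ≤ d}(x_j - x_i) equals Δ(x_1,...,x_d). -/
/-- Partial derivative in the `i`-th coordinate of a function on `ℝ^d`. -/
noncomputable def pd (d : ℕ) (i : Fin d) (f : (Fin d → ℝ) → ℝ) : (Fin d → ℝ) → ℝ :=
  fun x => fderiv ℝ f x (Pi.single i 1)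

/-- The Vandermonde product `Δ(x) = ∏_{i < j} (x_j - x_i)`. -/
noncomputable def vand (d : ℕ) (x : Fin d → ℝ) : ℝ :=
  ∏ p ∈ Finset.univ.filter (fun p : Fin d × Fin d => p.1 < p.2), (x p.2 - x p.1)

open MvPolynomial Matrix Finset

variable {d : ℕ}

/-- Leibniz rule for `pderiv` on a finite product. -/
lemma pderiv_finset_prod (i : Fin d) {ι : Type*} [DecidableEq ι] (s : Finset ι)
    (f : ι → MvPolynomial (Fin d) ℝ) :
    pderiv i (∏ k ∈ s, f k) = ∑ k ∈ s, pderiv i (f k) * ∏ l ∈ s.erase k, f l := by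
  induction s using Finset.induction_on with
  | empty => simp
  | insert a s ha ih =>
    rw [Finset.prod_insert ha, pderiv_mul, ih, Finset.sum_insert ha,
      Finset.erase_insert ha, Finset.mul_sum]
    congr 1
    refine Finset.sum_congr rfl fun k hk => ?_
    rw [Finset.erase_insert_of_ne (by rintro rfl; exact ha hk),
      Finset.prod_insert (fun h => ha (Finset.mem_of_mem_erase h))]
    ring

/-- `pderiv i` of a determinant when only row `i` depends on `X i`. -/
lemma pderiv_det (i : Fin d) (M : Matrix (Fin d) (Fin d) (MvPolynomial (Fin d) ℝ))
    (h : ∀ k, k ≠ i → ∀ j, pderiv i (M k j) = 0) :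
    pderiv i M.det = (M.updateRow i fun j => pderiv i (M i j)).det := by
  rw [Matrix.det_apply', Matrix.det_apply', map_sum]
  refine Finset.sum_congr rfl fun σ _ => ?_
  rw [pderiv_mul, Derivation.map_intCast, zero_mul, zero_add]
  congr 1
  rw [pderiv_finset_prod]
  rw [Finset.sum_eq_single (σ⁻¹ i)]
  · rw [← Finset.mul_prod_erase Finset.univ _ (Finset.mem_univ (σ⁻¹ i))]
    have h1 : σ (σ⁻¹ i) = i := Equiv.apply_symm_apply σ i
    rw [h1, Matrix.updateRow_self]
    congr 1
    refine Finset.prod_congr rfl fun k hk => ?_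
    have : σ k ≠ i := by
      intro hki
      exact (Finset.mem_erase.mp hk).1 (by rw [← hki, Equiv.Perm.inv_def, Equiv.symm_apply_apply])
    rw [Matrix.updateRow_ne this]
  · intro k _ hk
    have : σ k ≠ i := fun hki => hk (by rw [← hki, Equiv.Perm.inv_def, Equiv.symm_apply_apply])
    rw [h _ this, zero_mul]
  · simp

/-- Row-modified Vandermonde matrix: rows in `S` have had `I - d/dx` applied. -/
noncomputable def Mm (d : ℕ) (S : Finset (Fin d)) :
    Matrix (Fin d) (Fin d) (MvPolynomial (Fin d) ℝ) :=
  Matrix.of fun i j => if i ∈ S then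
    X i ^ (j : ℕ) - (((j : ℕ) : MvPolynomial (Fin d) ℝ) * X i ^ ((j : ℕ) - 1))
  else X i ^ (j : ℕ)

lemma pderiv_Mm_ne (i : Fin d) (S : Finset (Fin d)) {k : Fin d} (hk : k ≠ i) (j : Fin d) :
    pderiv i (Mm d S k j) = 0 := by
  simp only [Mm, Matrix.of_apply]
  split_ifs <;>
    simp [pderiv_pow, pderiv_X_of_ne hk, pderiv_mul, Derivation.map_natCast]

lemma det_updateRow_sub' (M : Matrix (Fin d) (Fin d) (MvPolynomial (Fin d) ℝ))
    (i : Fin d) (u v : Fin d → MvPolynomial (Fin d) ℝ) :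
    (M.updateRow i (u - v)).det = (M.updateRow i u).det - (M.updateRow i v).det := by
  have h := Matrix.det_updateRow_add M i (u - v) v
  rw [sub_add_cancel] at h
  exact eq_sub_of_add_eq h.symm

lemma step (i : Fin d) (S : Finset (Fin d)) (hi : i ∉ S) :
    (Mm d S).det - pderiv i (Mm d S).det = (Mm d (insert i S)).det := by
  rw [pderiv_det i _ (fun k hk j => pderiv_Mm_ne i S hk j)]
  have hrow : (fun j => pderiv i (Mm d S i j))
      = fun j : Fin d => ((j : ℕ) : MvPolynomial (Fin d) ℝ) * X i ^ ((j : ℕ) - 1) := by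
    funext j
    simp [Mm, hi, pderiv_pow]
  rw [hrow]
  have h1 : (Mm d S).det = ((Mm d S).updateRow i (Mm d S i)).det := by
    rw [Matrix.updateRow_eq_self]
  rw [h1, ← det_updateRow_sub']
  congr 1
  ext k j
  rcases eq_or_ne k i with rfl | hk
  · simp [Mm, hi, Matrix.updateRow_self]
  · simp [Matrix.updateRow_ne hk, Mm, Finset.mem_insert, hk]

/-- The Vandermonde polynomial. -/
noncomputable def Vp (d : ℕ) : MvPolynomial (Fin d) ℝ :=
  ∏ p ∈ Finset.univ.filter (fun p : Fin d × Fin d => p.1 < p.2), (X p.2 - X p.1)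

lemma prod_filter_lt {M : Type*} [CommMonoid M] (f : Fin d × Fin d → M) :
    ∏ p ∈ Finset.univ.filter (fun p : Fin d × Fin d => p.1 < p.2), f p
      = ∏ i : Fin d, ∏ j ∈ Finset.Ioi i, f (i, j) := by
  rw [← Finset.prod_sigma (Finset.univ : Finset (Fin d)) (fun i => Finset.Ioi i)
    (fun p => f (p.1, p.2))]
  refine Finset.prod_nbij' (fun p => (⟨p.1, p.2⟩ : (_ : Fin d) × Fin d))
    (fun p => ((p.1, p.2) : Fin d × Fin d)) ?_ ?_ ?_ ?_ ?_ <;>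
    simp [Finset.mem_sigma, Finset.mem_Ioi]

lemma Mm_empty : (Mm d ∅).det = Vp d := by
  have : Mm d ∅ = Matrix.vandermonde X := by
    ext i j; simp [Mm, Matrix.vandermonde]
  rw [this, Matrix.det_vandermonde, Vp, prod_filter_lt]

lemma Mm_univ : (Mm d Finset.univ).det = (Matrix.vandermonde (X : Fin d → MvPolynomial (Fin d) ℝ)).det := by
  rw [Matrix.det_eval_matrixOfPolynomials_eq_det_vandermonde
    (X : Fin d → MvPolynomial (Fin d) ℝ)
    (fun j => Polynomial.X ^ (j : ℕ)
      - Polynomial.C (((j : ℕ) : MvPolynomial (Fin d) ℝ)) * Polynomial.X ^ ((j : ℕ) - 1))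
    ?_ ?_]
  · congr 1
    ext i j
    simp [Mm]
  · intro j
    rcases Nat.eq_zero_or_pos (j : ℕ) with hj | hj
    · simp [hj]
    · have hle : (Polynomial.C (((j : ℕ) : MvPolynomial (Fin d) ℝ))
          * Polynomial.X ^ ((j : ℕ) - 1)).natDegree
          < (Polynomial.X ^ (j : ℕ) : Polynomial (MvPolynomial (Fin d) ℝ)).natDegree := by
        rw [Polynomial.natDegree_X_pow]
        have h2 : (Polynomial.C (((j : ℕ) : MvPolynomial (Fin d) ℝ))
            * Polynomial.X ^ ((j : ℕ) - 1)).natDegree ≤ (j : ℕ) - 1 :=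
          (Polynomial.natDegree_C_mul_le _ _).trans (le_of_eq (Polynomial.natDegree_X_pow _))
        omega
      rw [Polynomial.natDegree_sub_eq_left_of_natDegree_lt hle, Polynomial.natDegree_X_pow]
  · intro j
    rcases Nat.eq_zero_or_pos (j : ℕ) with hj | hj
    · simp [hj, Polynomial.monic_one]
    · exact Polynomial.monic_X_pow_sub
        (lt_of_le_of_lt (Polynomial.degree_C_mul_X_pow_le _ _)
          (by exact_mod_cast Nat.sub_lt hj one_pos))

lemma fold_poly (l : List (Fin d)) (hl : l.Nodup) :
    l.foldr (fun i p => p - pderiv i p) (Mm d ∅).det = (Mm d l.toFinset).det := by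
  induction l with
  | nil => simp
  | cons i l ih =>
    obtain ⟨hi, hl'⟩ := List.nodup_cons.mp hl
    rw [List.foldr_cons, ih hl', List.toFinset_cons,
      ← step i l.toFinset (by simpa using hi)]

lemma poly_fold : (List.finRange d).foldr (fun i p => p - pderiv i p) (Vp d) = Vp d := by
  have h := fold_poly (List.finRange d) (List.nodup_finRange d)
  rw [Mm_empty] at h
  rw [h, List.toFinset_finRange, Mm_univ, Matrix.det_vandermonde, Vp, prod_filter_lt]

lemma hasFDerivAt_eval (p : MvPolynomial (Fin d) ℝ) (x : Fin d → ℝ) :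
    HasFDerivAt (fun y : Fin d → ℝ => eval y p)
      (∑ j : Fin d, eval x (pderiv j p) • (ContinuousLinearMap.proj j : (Fin d → ℝ) →L[ℝ] ℝ))
      x := by
  induction p using MvPolynomial.induction_on with
  | C a =>
    simp only [eval_C, pderiv_C, map_zero, zero_smul, Finset.sum_const_zero]
    exact hasFDerivAt_const a x
  | add p q hp hq =>
    have h : HasFDerivAt (fun y => eval y p + eval y q) _ x := hp.add hq
    simp only [← map_add] at h
    refine h.congr_fderiv (Eq.symm ?_)
    simp [map_add, add_smul, Finset.sum_add_distrib]
  | mul_X p j hp =>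
    have hXj : HasFDerivAt (fun y : Fin d → ℝ => y j)
        (ContinuousLinearMap.proj j : (Fin d → ℝ) →L[ℝ] ℝ) x :=
      (ContinuousLinearMap.proj j : (Fin d → ℝ) →L[ℝ] ℝ).hasFDerivAt
    have h : HasFDerivAt (fun y => eval y p * y j) _ x := hp.mul hXj
    have hfun : (fun y : Fin d → ℝ => eval y p * y j) = fun y => eval y (p * X j) := by
      funext y; simp
    rw [hfun] at h
    refine h.congr_fderiv (Eq.symm ?_)
    ext v
    classical
    simp only [ContinuousLinearMap.sum_apply, ContinuousLinearMap.smul_apply,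
      ContinuousLinearMap.proj_apply, ContinuousLinearMap.add_apply,
      pderiv_mul, _root_.map_add, _root_.map_mul, eval_X, smul_eq_mul, Finset.mul_sum]
    have hXeval : ∀ k : Fin d, eval x (pderiv k (X j : MvPolynomial (Fin d) ℝ))
        = if k = j then 1 else 0 := by
      intro k
      rcases eq_or_ne k j with rfl | hk
      · simp
      · simp [pderiv_X_of_ne (Ne.symm hk), hk]
    simp only [hXeval, add_mul]
    rw [Finset.sum_add_distrib, add_comm]
    congr 1
    · rw [Finset.sum_congr rfl fun k _ => show (eval x p * (if k = j then (1:ℝ) else 0)) * v k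
        = if k = j then eval x p * v k else 0 from by split_ifs <;> ring]
      simp [Finset.sum_ite_eq']
    · exact Finset.sum_congr rfl fun k _ => by ring

lemma pd_eval (i : Fin d) (p : MvPolynomial (Fin d) ℝ) :
    pd d i (fun y => eval y p) = fun x => eval x (pderiv i p) := by
  funext x
  have h := (hasFDerivAt_eval p x).fderiv
  rw [pd, h]
  classical
  simp [ContinuousLinearMap.sum_apply, Pi.single_apply, mul_ite, Finset.sum_ite_eq']

lemma fold_transfer (l : List (Fin d)) (q : MvPolynomial (Fin d) ℝ) :
    l.foldr (fun i g => fun x => g x - pd d i g x) (fun x => eval x q)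
      = fun x => eval x (l.foldr (fun i p => p - pderiv i p) q) := by
  induction l with
  | nil => rfl
  | cons i l ih =>
    simp only [List.foldr_cons, ih]
    funext x
    rw [pd_eval]
    simp [map_sub]

lemma vand_eq_eval : vand d = fun x => eval x (Vp d) := by
  funext x
  simp [vand, Vp, map_prod]

set_option linter.unusedVariables false in
/-- The operator `L = (I - ∂/∂x_1) ⋯ (I - ∂/∂x_d)` applied to the Vandermonde determinant
`Δ` gives back `Δ`. -/
theorem L_vandermonde (d : ℕ) (hd : 1 ≤ d) :
    (List.finRange d).foldr (fun i g => fun x => g x - pd d i g x) (vand d) = vand d := by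
  rw [vand_eq_eval, fold_transfer, poly_fold]
end

section
/- Let λ_1 > ... > λ_d > 0 and h(x) = e^{Σ_i λ_i x_i} det(λ_i^{i-j} e^{-λ_i x_j})_{i,j=1}^d. Let S(1) have independent coordinates S_j(1) = x_j + X_j with X_j ∼ Exp(λ_j). Then for every x ∈ W^d, E_x[h(S(1)) 1_{S(1) ∈ W^d}] = h(x). -/
open MeasureTheory

open Real Set

set_option linter.unreachableTactic false
set_option linter.unusedTactic false

/-- `h(x) = e^{Σ_i λ_i x_i} det(λ_i^(i-j) e^(-λ_i x_j))_{i,j=1}^d`. -/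
noncomputable def hfun (d : ℕ) (lam : Fin d → ℝ) (x : Fin d → ℝ) : ℝ :=
  Real.exp (∑ i, lam i * x i) *
    Matrix.det (Matrix.of fun i j : Fin d =>
      lam i ^ ((i : ℤ) - (j : ℤ)) * Real.exp (-(lam i) * x j))



noncomputable def Mat (n : ℕ) (lam : Fin n → ℝ) (y : Fin n → ℝ) : Matrix (Fin n) (Fin n) ℝ :=
  Matrix.of fun i j => lam i ^ ((i : ℤ) - (j : ℤ)) * Real.exp (-(lam i) * y j)

noncomputable def NMat (n : ℕ) (lam : Fin n → ℝ) (x : Fin n → ℝ) : Matrix (Fin n) (Fin n) ℝ :=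
  Matrix.of fun i j => lam i ^ ((i : ℤ) - (j : ℤ) - 1) * Real.exp (-(lam i) * x j)

def S (n : ℕ) (x : Fin n → ℝ) : Set (Fin n → ℝ) := {y | StrictMono y ∧ ∀ j, x j < y j}

lemma measurableSet_S (n : ℕ) (x : Fin n → ℝ) : MeasurableSet (S n x) := by
  have h1 : MeasurableSet {y : Fin n → ℝ | StrictMono y} := by
    have : {y : Fin n → ℝ | StrictMono y} =
        ⋂ (i : Fin n) (j : Fin n) (_ : i < j), {y : Fin n → ℝ | y i < y j} := by
      ext y
      simp only [Set.mem_setOf_eq, Set.mem_iInter]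
      exact ⟨fun h i j hij => h hij, fun h a b hab => h a b hab⟩
    rw [this]
    exact MeasurableSet.iInter fun i => MeasurableSet.iInter fun j =>
      MeasurableSet.iInter fun _ => measurableSet_lt (measurable_pi_apply i) (measurable_pi_apply j)
  have h2 : MeasurableSet {y : Fin n → ℝ | ∀ j, x j < y j} := by
    have : {y : Fin n → ℝ | ∀ j, x j < y j} = ⋂ (j : Fin n), {y : Fin n → ℝ | x j < y j} := by
      ext y; simp [Set.mem_iInter]
    rw [this]
    exact MeasurableSet.iInter fun j => measurableSet_lt measurable_const (measurable_pi_apply j)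
  exact h1.inter h2

lemma cont_det (n : ℕ) (lam : Fin n → ℝ) : Continuous fun y : Fin n → ℝ => (Mat n lam y).det := by
  apply Continuous.matrix_det
  apply continuous_matrix
  intro i j
  exact continuous_const.mul ((continuous_const.mul (continuous_apply j)).rexp)

lemma indicator_cmul {α : Type*} (s : Set α) (c : ℝ) (f : α → ℝ) :
    Set.indicator s (fun y => c * f y) = fun y => c * Set.indicator s f y := by
  funext y; by_cases h : y ∈ s <;> simp [h]

lemma integral_Ioi_exp {c : ℝ} (hc : 0 < c) (a : ℝ) :
    ∫ t in Set.Ioi a, Real.exp (-(c * t)) = c⁻¹ * Real.exp (-(c * a)) := by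
  have hderiv : ∀ t ∈ Set.Ici a, HasDerivAt (fun t => -(c⁻¹ * Real.exp (-(c * t))))
      (Real.exp (-(c * t))) t := by
    intro t _
    have h1 : HasDerivAt (fun t : ℝ => -(c * t)) (-c) t := by
      have h := ((hasDerivAt_id' t).const_mul c).neg
      rw [mul_one] at h
      exact h
    have h2 := h1.exp
    have h3 := (h2.const_mul c⁻¹).neg
    have e : -(c⁻¹ * (Real.exp (-(c * t)) * -c)) = Real.exp (-(c * t)) := by
      field_simp
    rw [e] at h3
    exact h3
  have hint : IntegrableOn (fun t => Real.exp (-(c * t))) (Set.Ioi a) := by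
    simpa [neg_mul] using exp_neg_integrableOn_Ioi a hc
  have htend : Filter.Tendsto (fun t => -(c⁻¹ * Real.exp (-(c * t)))) Filter.atTop (nhds 0) := by
    have : Filter.Tendsto (fun t : ℝ => Real.exp (-(c * t))) Filter.atTop (nhds 0) := by
      have := Real.tendsto_exp_neg_atTop_nhds_zero.comp
        (Filter.Tendsto.const_mul_atTop hc Filter.tendsto_id)
      simp only [Function.comp_def] at this
      exact this
    simpa using ((this.const_mul c⁻¹).neg)
  have := MeasureTheory.integral_Ioi_of_hasDerivAt_of_tendsto' hderiv hint htend
  rw [this]; ring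

lemma integral_Ioo_exp {c : ℝ} (hc : 0 < c) {a b : ℝ} (hab : a ≤ b) :
    ∫ t in Set.Ioo a b, Real.exp (-(c * t)) =
      c⁻¹ * (Real.exp (-(c * a)) - Real.exp (-(c * b))) := by
  have hderiv : ∀ t ∈ Set.uIcc a b, HasDerivAt (fun t => -(c⁻¹ * Real.exp (-(c * t))))
      (Real.exp (-(c * t))) t := by
    intro t _
    have h1 : HasDerivAt (fun t : ℝ => -(c * t)) (-c) t := by
      have h := ((hasDerivAt_id' t).const_mul c).neg
      rw [mul_one] at h
      exact h
    have h3 := ((h1.exp).const_mul c⁻¹).neg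
    have e : -(c⁻¹ * (Real.exp (-(c * t)) * -c)) = Real.exp (-(c * t)) := by
      field_simp
    rw [e] at h3
    exact h3
  have hcont : ContinuousOn (fun t => Real.exp (-(c * t))) (Set.uIcc a b) :=
    (Real.continuous_exp.comp (continuous_const.mul continuous_id).neg).continuousOn
  have h := intervalIntegral.integral_eq_sub_of_hasDerivAt hderiv
    (hcont.intervalIntegrable)
  rw [← MeasureTheory.integral_Ioc_eq_integral_Ioo, ← intervalIntegral.integral_of_le hab, h]
  ring


lemma integrable_main (n : ℕ) (lam x : Fin n → ℝ) (hpos : ∀ i, 0 < lam i) :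
    Integrable (Set.indicator (S n x) (fun y => (Mat n lam y).det))
      (volume : Measure (Fin n → ℝ)) := by
  set g : Equiv.Perm (Fin n) → Fin n → ℝ → ℝ := fun σ j =>
    Set.indicator (Set.Ioi (x j))
      (fun t => lam (σ j) ^ ((σ j : ℤ) - (j : ℤ)) * Real.exp (-(lam (σ j)) * t)) with hg
  have hg_int : ∀ σ j, Integrable (g σ j) volume := by
    intro σ j
    rw [hg]
    refine (integrable_indicator_iff measurableSet_Ioi).2 ?_
    exact (exp_neg_integrableOn_Ioi (x j) (hpos (σ j))).const_mul _
  have hg_nonneg : ∀ σ j t, 0 ≤ g σ j t := by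
    intro σ j t
    apply Set.indicator_nonneg
    intro t _
    exact mul_nonneg (zpow_pos (hpos _) _).le (Real.exp_pos _).le
  set G : (Fin n → ℝ) → ℝ := fun y => ∑ σ : Equiv.Perm (Fin n), ∏ j, g σ j (y j) with hG
  have hG_int : Integrable G volume :=
    integrable_finset_sum _ (fun σ _ => Integrable.fintype_prod (fun j => hg_int σ j))
  have hmeas : AEStronglyMeasurable
      (Set.indicator (S n x) (fun y => (Mat n lam y).det)) volume :=
    ((cont_det n lam).aestronglyMeasurable).indicator (measurableSet_S n x)
  refine hG_int.mono hmeas (Filter.Eventually.of_forall fun y => ?_)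
  rw [Real.norm_eq_abs, Real.norm_eq_abs]
  refine le_trans ?_ (le_abs_self _)
  by_cases hy : y ∈ S n x
  · rw [Set.indicator_of_mem hy, Matrix.det_apply]
    refine le_trans (Finset.abs_sum_le_sum_abs _ _) (Finset.sum_le_sum fun σ _ => ?_)
    have habs : |Equiv.Perm.sign σ • ∏ i, Mat n lam y (σ i) i| = |∏ i, Mat n lam y (σ i) i| := by
      rcases Int.units_eq_one_or (Equiv.Perm.sign σ) with h | h <;> simp [h]
    rw [habs, Finset.abs_prod]
    refine le_of_eq (Finset.prod_congr rfl fun i _ => ?_)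
    have hyi : y i ∈ Set.Ioi (x i) := hy.2 i
    show _ = (Set.Ioi (x i)).indicator
      (fun t => lam (σ i) ^ ((σ i : ℤ) - (i : ℤ)) * Real.exp (-(lam (σ i)) * t)) (y i)
    rw [Set.indicator_of_mem hyi]
    have : (0:ℝ) < Mat n lam y (σ i) i := by
      simp only [Mat, Matrix.of_apply]
      exact mul_pos (zpow_pos (hpos _) _) (Real.exp_pos _)
    rw [abs_of_pos this]
    rfl
  · rw [Set.indicator_of_notMem hy, abs_zero]
    exact Finset.sum_nonneg fun σ _ => Finset.prod_nonneg fun j _ => hg_nonneg σ j (y j)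

lemma mem_S_cons {m : ℕ} (x : Fin (m+2) → ℝ) (t : ℝ) (rest : Fin (m+1) → ℝ) :
    Fin.cons t rest ∈ S (m+2) x ↔
      rest ∈ S (m+1) (x ∘ Fin.succ) ∧ t ∈ Set.Ioo (x 0) (rest 0) := by
  constructor
  · rintro ⟨hmono, hlt⟩
    refine ⟨⟨?_, ?_⟩, ?_, ?_⟩
    · intro a b hab
      have := hmono (Fin.succ_lt_succ_iff.mpr hab)
      simpa [Fin.cons_succ] using this
    · intro j; simpa [Fin.cons_succ] using hlt j.succ
    · simpa [Fin.cons_zero] using hlt 0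
    · have := hmono (Fin.succ_pos (0 : Fin (m+1)))
      simpa [Fin.cons_zero, Fin.cons_succ] using this
  · rintro ⟨⟨hmono, hlt⟩, ht0, ht1⟩
    refine ⟨?_, ?_⟩
    · rw [Fin.strictMono_iff_lt_succ]
      intro i
      refine Fin.cases ?_ (fun j => ?_) i
      · simpa [Fin.cons_zero, Fin.cons_succ] using ht1
      · rw [← Fin.succ_castSucc, Fin.cons_succ, Fin.cons_succ]
        exact hmono (Fin.castSucc_lt_succ (i := j))
    · intro j
      refine Fin.cases ?_ (fun j' => ?_) j
      · simpa [Fin.cons_zero] using ht0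
      · simpa [Fin.cons_succ] using hlt j'

lemma det_minor_Mat {n : ℕ} (lam : Fin (n+1) → ℝ) (hpos : ∀ i, 0 < lam i) (i : Fin (n+1))
    (t : ℝ) (r : Fin n → ℝ) :
    ((Mat (n+1) lam (Fin.cons t r)).submatrix i.succAbove Fin.succ).det =
      (∏ k : Fin n, lam (i.succAbove k) ^ ((i.succAbove k : ℤ) - (k : ℤ) - 1)) *
        (Mat n (lam ∘ i.succAbove) r).det := by
  rw [← Matrix.det_mul_column]
  congr 1
  ext i'' j''
  simp only [Matrix.of_apply, Mat, Matrix.submatrix_apply, Fin.cons_succ, Function.comp]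
  rw [← mul_assoc, ← zpow_add₀ (hpos _).ne']
  congr 2
  rw [Fin.val_succ]
  push_cast
  ring

lemma det_minor_NMat {n : ℕ} (lam : Fin (n+1) → ℝ) (hpos : ∀ i, 0 < lam i) (i : Fin (n+1))
    (x : Fin (n+1) → ℝ) :
    ((NMat (n+1) lam x).submatrix i.succAbove Fin.succ).det =
      (∏ k : Fin n, lam (i.succAbove k) ^ ((i.succAbove k : ℤ) - (k : ℤ) - 1)) *
        (NMat n (lam ∘ i.succAbove) (x ∘ Fin.succ)).det := by
  rw [← Matrix.det_mul_column]
  congr 1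
  ext i'' j''
  simp only [Matrix.of_apply, NMat, Matrix.submatrix_apply, Function.comp]
  rw [← mul_assoc, ← zpow_add₀ (hpos _).ne']
  congr 2
  rw [Fin.val_succ]
  push_cast
  ring

lemma sum_telescope_zero {m : ℕ} (lam : Fin (m+2) → ℝ) (rest : Fin (m+1) → ℝ) :
    ∑ i : Fin (m+2), (-1:ℝ)^(i:ℕ) * (lam i ^ ((i:ℤ) - 1) * Real.exp (-(lam i) * rest 0)) *
      ((Mat (m+2) lam (Fin.cons 0 rest)).submatrix i.succAbove Fin.succ).det = 0 := by
  set C : Matrix (Fin (m+2)) (Fin (m+2)) ℝ := Matrix.of fun i j =>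
    (Fin.cases (lam i ^ ((i:ℤ) - 1) * Real.exp (-(lam i) * rest 0))
      (fun j' => lam i ^ ((i:ℤ) - ((j' : ℤ) + 1)) * Real.exp (-(lam i) * rest j')) j : ℝ)
    with hC
  have hsub : ∀ i : Fin (m+2), (C.submatrix i.succAbove Fin.succ) =
      ((Mat (m+2) lam (Fin.cons 0 rest)).submatrix i.succAbove Fin.succ) := by
    intro i
    ext i'' j''
    simp only [hC, Matrix.submatrix_apply, Matrix.of_apply, Fin.cases_succ, Mat, Fin.cons_succ]
    congr 2
    all_goals simp [Fin.val_succ]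
  have hdet : C.det = 0 := by
    refine Matrix.det_zero_of_column_eq (show (0 : Fin (m+2)) ≠ 1 by simp) fun k => ?_
    rw [show (1 : Fin (m+2)) = Fin.succ 0 from (Fin.succ_zero_eq_one).symm]
    simp only [hC, Matrix.of_apply, Fin.cases_zero, Fin.cases_succ]
    congr 2
    all_goals push_cast [Fin.val_succ]
    all_goals try ring
  calc ∑ i : Fin (m+2), (-1:ℝ)^(i:ℕ) * (lam i ^ ((i:ℤ) - 1) * Real.exp (-(lam i) * rest 0)) *
        ((Mat (m+2) lam (Fin.cons 0 rest)).submatrix i.succAbove Fin.succ).det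
      = C.det := by
        rw [Matrix.det_succ_column_zero]
        refine Finset.sum_congr rfl fun i _ => ?_
        rw [hsub i]
        simp only [hC, Matrix.of_apply, Fin.cases_zero]
    _ = 0 := hdet

lemma submatrix_indep {n : ℕ} (lam : Fin (n+1) → ℝ) (t t' : ℝ) (rest : Fin n → ℝ)
    (i : Fin (n+1)) :
    (Mat (n+1) lam (Fin.cons t rest)).submatrix i.succAbove Fin.succ =
      (Mat (n+1) lam (Fin.cons t' rest)).submatrix i.succAbove Fin.succ := by
  ext i'' j''
  simp [Mat, Fin.cons_succ]

lemma inner_integral {m : ℕ} (lam x : Fin (m+2) → ℝ) (hpos : ∀ i, 0 < lam i)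
    (hx : StrictMono x) (rest : Fin (m+1) → ℝ) :
    (∫ t : ℝ, Set.indicator (S (m+2) x) (fun y => (Mat (m+2) lam y).det) (Fin.cons t rest)) =
      Set.indicator (S (m+1) (x ∘ Fin.succ)) (fun rest =>
        ∑ i : Fin (m+2), (-1:ℝ)^(i:ℕ) *
          (lam i ^ ((i:ℤ) - 1) * (Real.exp (-(lam i) * x 0) - Real.exp (-(lam i) * rest 0))) *
          ((Mat (m+2) lam (Fin.cons 0 rest)).submatrix i.succAbove Fin.succ).det) rest := by
  by_cases hrest : rest ∈ S (m+1) (x ∘ Fin.succ)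
  case neg =>
    rw [Set.indicator_of_notMem hrest]
    have hz : ∀ t : ℝ,
        Set.indicator (S (m+2) x) (fun y => (Mat (m+2) lam y).det) (Fin.cons t rest) = 0 := by
      intro t
      apply Set.indicator_of_notMem
      intro hmem
      exact hrest ((mem_S_cons x t rest).mp hmem).1
    simp only [hz, integral_zero]
  case pos =>
    rw [Set.indicator_of_mem hrest]
    have hle : x 0 < rest 0 := lt_trans (hx (Fin.succ_pos 0)) (hrest.2 0)
    have heq : ∀ t : ℝ,
        Set.indicator (S (m+2) x) (fun y => (Mat (m+2) lam y).det) (Fin.cons t rest)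
          = Set.indicator (Set.Ioo (x 0) (rest 0))
              (fun t => (Mat (m+2) lam (Fin.cons t rest)).det) t := by
      intro t
      by_cases ht : t ∈ Set.Ioo (x 0) (rest 0)
      · rw [Set.indicator_of_mem ht, Set.indicator_of_mem ((mem_S_cons x t rest).mpr ⟨hrest, ht⟩)]
      · rw [Set.indicator_of_notMem ht,
          Set.indicator_of_notMem (fun hmem => ht ((mem_S_cons x t rest).mp hmem).2)]
    simp_rw [heq]
    rw [MeasureTheory.integral_indicator measurableSet_Ioo]
    have hdet : ∀ t : ℝ, (Mat (m+2) lam (Fin.cons t rest)).det =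
        ∑ i : Fin (m+2), ((-1:ℝ)^(i:ℕ) * lam i ^ (i:ℤ) *
          ((Mat (m+2) lam (Fin.cons 0 rest)).submatrix i.succAbove Fin.succ).det) *
          Real.exp (-(lam i * t)) := by
      intro t
      rw [Matrix.det_succ_column_zero]
      refine Finset.sum_congr rfl fun i _ => ?_
      rw [submatrix_indep lam t 0 rest i]
      have h0 : Mat (m+2) lam (Fin.cons t rest) i 0 = lam i ^ (i:ℤ) * Real.exp (-(lam i * t)) := by
        simp [Mat, Fin.cons_zero, neg_mul]
      rw [h0]
      ring
    simp_rw [hdet]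
    rw [MeasureTheory.integral_finset_sum]
    · refine Finset.sum_congr rfl fun i _ => ?_
      rw [MeasureTheory.integral_const_mul, integral_Ioo_exp (hpos i) hle.le,
        zpow_sub_one₀ (hpos i).ne']
      ring_nf
    · intro i _
      have hc : Continuous fun a : ℝ => (-1:ℝ)^(i:ℕ) * lam i ^ (i:ℤ) *
          ((Mat (m+2) lam (Fin.cons 0 rest)).submatrix i.succAbove Fin.succ).det *
          Real.exp (-(lam i * a)) := by fun_prop
      exact (hc.integrableOn_Ioc).mono_set Set.Ioo_subset_Ioc_self

theorem key : ∀ (n : ℕ) (lam x : Fin n → ℝ), (∀ i, 0 < lam i) → StrictMono x →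
    (∫ y : Fin n → ℝ, Set.indicator (S n x) (fun y => (Mat n lam y).det) y) =
      (NMat n lam x).det := by
  intro n
  induction n with
  | zero =>
    intro lam x hpos hx
    have hS : S 0 x = Set.univ := by
      ext y
      simp only [S, Set.mem_setOf_eq, Set.mem_univ, iff_true]
      exact ⟨fun a => a.elim0, fun j => j.elim0⟩
    rw [hS, Set.indicator_univ]
    simp only [Matrix.det_fin_zero, NMat]
    rw [MeasureTheory.integral_const]
    simp [volume_pi, Measure.real]
  | succ n ih =>
    match n, ih with
    | 0, _ =>
      intro lam x hpos hx
      have hfy : ∀ y : Fin 1 → ℝ, Set.indicator (S 1 x) (fun y => (Mat 1 lam y).det) y =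
          Set.indicator (Set.Ioi (x 0)) (fun t => Real.exp (-(lam 0 * t))) (y 0) := by
        intro y
        by_cases h : x 0 < y 0
        · have hy : y ∈ S 1 x := by
            refine ⟨Subsingleton.strictMono y, fun j => ?_⟩
            rw [Subsingleton.elim j 0]; exact h
          rw [Set.indicator_of_mem hy, Set.indicator_of_mem (Set.mem_Ioi.mpr h)]
          simp [Mat, Matrix.det_fin_one, neg_mul]
        · have hy : y ∉ S 1 x := fun hy => h (hy.2 0)
          rw [Set.indicator_of_notMem hy,
            Set.indicator_of_notMem (fun hm => h (Set.mem_Ioi.mp hm))]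
      simp_rw [hfy]
      have mp := MeasureTheory.volume_preserving_funUnique (Fin 1) ℝ
      have h2 : (∫ y : Fin 1 → ℝ,
          Set.indicator (Set.Ioi (x 0)) (fun t => Real.exp (-(lam 0 * t))) (y 0)) =
          ∫ t : ℝ, Set.indicator (Set.Ioi (x 0)) (fun t => Real.exp (-(lam 0 * t))) t := by
        rw [← mp.integral_comp']
        rfl
      rw [h2, MeasureTheory.integral_indicator measurableSet_Ioi, integral_Ioi_exp (hpos 0)]
      simp [NMat, Matrix.det_fin_one, zpow_neg, neg_mul]
    | (m+1), ih =>
      intro lam x hpos hx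
      set x' : Fin (m+1) → ℝ := x ∘ Fin.succ with hx'def
      have hx' : StrictMono x' := hx.comp Fin.strictMono_succ
      set F := Set.indicator (S (m+2) x) (fun y => (Mat (m+2) lam y).det) with hF
      have hFint : Integrable F (volume : Measure (Fin (m+2) → ℝ)) :=
        integrable_main _ lam x hpos
      have mp := measurePreserving_piFinSuccAbove (fun _ : Fin (m+2) => (volume : Measure ℝ)) 0
      have mps := MeasurePreserving.symm _ mp
      have hcons : ∀ p : ℝ × (Fin (m+1) → ℝ),
          ((MeasurableEquiv.piFinSuccAbove (fun _ : Fin (m+2) => ℝ) 0).symm p) =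
            Fin.cons p.1 p.2 := by
        intro p
        simp [MeasurableEquiv.piFinSuccAbove_symm_apply, Fin.insertNthEquiv, Fin.insertNth_zero]
      have hGint : Integrable (fun p : ℝ × (Fin (m+1) → ℝ) => F (Fin.cons p.1 p.2))
          ((volume : Measure ℝ).prod (Measure.pi fun _ => (volume : Measure ℝ))) := by
        rw [volume_pi] at hFint
        have := (mps.integrable_comp_emb
          (MeasurableEquiv.measurableEmbedding _)).2 hFint
        convert this using 2 with p
        exact (congrArg F (hcons p)).symm
      have step1 : (∫ y : Fin (m+2) → ℝ, F y) =
          ∫ rest : Fin (m+1) → ℝ, (∫ t : ℝ, F (Fin.cons t rest))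
            ∂(Measure.pi fun _ => (volume : Measure ℝ)) := by
        rw [volume_pi, ← mps.integral_comp']
        have : (fun p : ℝ × (Fin (m+1) → ℝ) =>
            F ((MeasurableEquiv.piFinSuccAbove (fun _ : Fin (m+2) => ℝ) 0).symm p)) =
            fun p : ℝ × (Fin (m+1) → ℝ) => F (Fin.cons p.1 p.2) := by
          funext p; rw [hcons p]
        rw [show (∫ p : ℝ × (Fin (m+1) → ℝ),
            F ((MeasurableEquiv.piFinSuccAbove (fun _ : Fin (m+2) => ℝ) 0).symm p)
            ∂((volume : Measure ℝ).prod (Measure.pi fun _ => (volume : Measure ℝ)))) =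
          ∫ p : ℝ × (Fin (m+1) → ℝ), F (Fin.cons p.1 p.2)
            ∂((volume : Measure ℝ).prod (Measure.pi fun _ => (volume : Measure ℝ))) from
          congrArg _ this]
        rw [MeasureTheory.integral_prod_symm _ hGint, ← volume_pi]
      rw [step1, ← volume_pi]
      set Pfac : Fin (m+2) → ℝ := fun i => ∏ k : Fin (m+1),
        lam (i.succAbove k) ^ ((i.succAbove k : ℤ) - (k : ℤ) - 1) with hPfac
      have hsplit : ∀ rest : Fin (m+1) → ℝ,
          Set.indicator (S (m+1) (x ∘ Fin.succ)) (fun rest =>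
            ∑ i : Fin (m+2), (-1:ℝ)^(i:ℕ) *
              (lam i ^ ((i:ℤ) - 1) * (Real.exp (-(lam i) * x 0) - Real.exp (-(lam i) * rest 0))) *
              ((Mat (m+2) lam (Fin.cons 0 rest)).submatrix i.succAbove Fin.succ).det) rest
          = ∑ i : Fin (m+2),
              ((-1:ℝ)^(i:ℕ) * (lam i ^ ((i:ℤ)-1) * Real.exp (-(lam i) * x 0)) * Pfac i) *
              Set.indicator (S (m+1) (x ∘ Fin.succ))
                (fun r => (Mat (m+1) (lam ∘ i.succAbove) r).det) rest := by
        intro rest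
        by_cases hr : rest ∈ S (m+1) (x ∘ Fin.succ)
        · rw [Set.indicator_of_mem hr]
          simp only [Set.indicator_of_mem hr]
          have expand : ∀ i : Fin (m+2), (-1:ℝ)^(i:ℕ) *
              (lam i ^ ((i:ℤ) - 1) * (Real.exp (-(lam i) * x 0) - Real.exp (-(lam i) * rest 0))) *
              ((Mat (m+2) lam (Fin.cons 0 rest)).submatrix i.succAbove Fin.succ).det
            = (-1:ℝ)^(i:ℕ) * (lam i ^ ((i:ℤ) - 1) * Real.exp (-(lam i) * x 0)) *
              ((Mat (m+2) lam (Fin.cons 0 rest)).submatrix i.succAbove Fin.succ).det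
              - (-1:ℝ)^(i:ℕ) * (lam i ^ ((i:ℤ) - 1) * Real.exp (-(lam i) * rest 0)) *
              ((Mat (m+2) lam (Fin.cons 0 rest)).submatrix i.succAbove Fin.succ).det := by
            intro i; ring
          rw [Finset.sum_congr rfl (fun i _ => expand i), Finset.sum_sub_distrib,
            sum_telescope_zero lam rest, sub_zero]
          refine Finset.sum_congr rfl fun i _ => ?_
          rw [det_minor_Mat lam hpos i 0 rest]
          ring
        · rw [Set.indicator_of_notMem hr]
          simp only [Set.indicator_of_notMem hr, mul_zero]
          simp
      have hpt : ∀ rest : Fin (m+1) → ℝ, (∫ t : ℝ, F (Fin.cons t rest)) =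
          ∑ i : Fin (m+2),
            ((-1:ℝ)^(i:ℕ) * (lam i ^ ((i:ℤ)-1) * Real.exp (-(lam i) * x 0)) * Pfac i) *
            Set.indicator (S (m+1) (x ∘ Fin.succ))
              (fun r => (Mat (m+1) (lam ∘ i.succAbove) r).det) rest :=
        fun rest => (inner_integral lam x hpos hx rest).trans (hsplit rest)
      rw [MeasureTheory.integral_congr_ae (Filter.Eventually.of_forall hpt)]
      rw [MeasureTheory.integral_finset_sum _ (fun i _ =>
        (integrable_main (m+1) (lam ∘ i.succAbove) (x ∘ Fin.succ)
          (fun k => hpos _)).const_mul _)]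
      conv_rhs => rw [Matrix.det_succ_column_zero (NMat (m+2) lam x)]
      refine Finset.sum_congr rfl fun i _ => ?_
      rw [MeasureTheory.integral_const_mul,
        ih (lam ∘ i.succAbove) (x ∘ Fin.succ) (fun k => hpos _) hx',
        det_minor_NMat lam hpos i x]
      have h00 : NMat (m+2) lam x i 0 =
          lam i ^ ((i:ℤ) - 1) * Real.exp (-(lam i) * x 0) := by
        simp [NMat]
      rw [h00]
      ring

/-- For `λ_1 > ⋯ > λ_d > 0` and a single step `S(1) = x + (X_1, …, X_d)` with independent
`X_j ∼ Exp(λ_j)`, `E_x[h(S(1)) 1_{S(1) ∈ W^d}] = h(x)` for every `x ∈ W^d`. -/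
theorem h_harmonic_distinct (d : ℕ) (hd : 1 ≤ d) (lam : Fin d → ℝ)
    (hpos : ∀ i, 0 < lam i) (hord : ∀ i j : Fin d, i < j → lam j < lam i)
    (x : Fin d → ℝ) (hx : ∀ i j : Fin d, i < j → x i < x j) :
    (∫ y, ({y : Fin d → ℝ | ∀ i j : Fin d, i < j → y i < y j}).indicator (hfun d lam) y *
        ∏ j, (if x j < y j then lam j * Real.exp (-(lam j) * (y j - x j)) else 0)
      ∂(Measure.pi fun _ => volume)) = hfun d lam x := by
  have hx' : StrictMono x := fun i j h => hx i j h
  rw [← MeasureTheory.volume_pi]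
  set C : ℝ := (∏ j, lam j) * Real.exp (∑ i, lam i * x i) with hC
  have hptw : ∀ y : Fin d → ℝ,
      ({y : Fin d → ℝ | ∀ i j : Fin d, i < j → y i < y j}).indicator (hfun d lam) y *
        ∏ j, (if x j < y j then lam j * Real.exp (-(lam j) * (y j - x j)) else 0)
      = Set.indicator (S d x) (fun y => C * (Mat d lam y).det) y := by
    intro y
    by_cases h1 : ∀ i j : Fin d, i < j → y i < y j
    · by_cases h2 : ∀ j, x j < y j
      · have hyW : y ∈ {y : Fin d → ℝ | ∀ i j : Fin d, i < j → y i < y j} := h1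
        have hyS : y ∈ S d x := ⟨fun a b hab => h1 a b hab, h2⟩
        rw [Set.indicator_of_mem hyW, Set.indicator_of_mem hyS]
        have hprod : (∏ j, (if x j < y j then lam j * Real.exp (-(lam j) * (y j - x j)) else 0))
            = (∏ j, lam j) * Real.exp (∑ j, -(lam j) * (y j - x j)) := by
          rw [Real.exp_sum, ← Finset.prod_mul_distrib]
          exact Finset.prod_congr rfl fun j _ => if_pos (h2 j)
        rw [hprod]
        show Real.exp (∑ i, lam i * y i) * (Mat d lam y).det *
            ((∏ j, lam j) * Real.exp (∑ j, -(lam j) * (y j - x j))) = C * (Mat d lam y).det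
        have hexp : Real.exp (∑ i, lam i * y i) * Real.exp (∑ j, -(lam j) * (y j - x j))
            = Real.exp (∑ i, lam i * x i) := by
          rw [← Real.exp_add]
          congr 1
          rw [← Finset.sum_add_distrib]
          exact Finset.sum_congr rfl fun i _ => by ring
        calc Real.exp (∑ i, lam i * y i) * (Mat d lam y).det *
              ((∏ j, lam j) * Real.exp (∑ j, -(lam j) * (y j - x j)))
            = (Real.exp (∑ i, lam i * y i) * Real.exp (∑ j, -(lam j) * (y j - x j))) *
              ((∏ j, lam j) * (Mat d lam y).det) := by ring
          _ = Real.exp (∑ i, lam i * x i) * ((∏ j, lam j) * (Mat d lam y).det) := by rw [hexp]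
          _ = C * (Mat d lam y).det := by rw [hC]; ring
      · obtain ⟨j, hj⟩ := not_forall.mp h2
        have hz : (∏ j, (if x j < y j then lam j * Real.exp (-(lam j) * (y j - x j)) else 0))
            = 0 := Finset.prod_eq_zero (Finset.mem_univ j) (if_neg hj)
        rw [hz, mul_zero, Set.indicator_of_notMem (fun hyS : y ∈ S d x => hj (hyS.2 j))]
    · rw [Set.indicator_of_notMem
          (fun hyW : y ∈ {y : Fin d → ℝ | ∀ i j : Fin d, i < j → y i < y j} => h1 hyW), zero_mul,
        Set.indicator_of_notMem (fun hyS : y ∈ S d x => h1 (fun a b hab => hyS.1 hab))]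
  refine Eq.trans (MeasureTheory.integral_congr_ae (Filter.Eventually.of_forall hptw)) ?_
  rw [indicator_cmul, MeasureTheory.integral_const_mul, key d lam x hpos hx']
  have hNdet : (NMat d lam x).det = (∏ i, (lam i)⁻¹) * (Mat d lam x).det := by
    rw [← Matrix.det_mul_column]
    congr 1
    ext i j
    simp only [NMat, Mat, Matrix.of_apply]
    rw [zpow_sub_one₀ (hpos i).ne']
    ring
  rw [hNdet, hC]
  have hone : (∏ j, lam j) * (∏ i, (lam i)⁻¹) = 1 := by
    rw [← Finset.prod_mul_distrib]
    exact Finset.prod_eq_one fun i _ => mul_inv_cancel₀ (hpos i).ne'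
  show (∏ j, lam j) * Real.exp (∑ i, lam i * x i) *
      ((∏ i, (lam i)⁻¹) * (Mat d lam x).det) = hfun d lam x
  unfold hfun
  show _ = Real.exp (∑ i, lam i * x i) * (Mat d lam x).det
  calc (∏ j, lam j) * Real.exp (∑ i, lam i * x i) * ((∏ i, (lam i)⁻¹) * (Mat d lam x).det)
      = ((∏ j, lam j) * (∏ i, (lam i)⁻¹)) *
        (Real.exp (∑ i, lam i * x i) * (Mat d lam x).det) := by ring
    _ = Real.exp (∑ i, lam i * x i) * (Mat d lam x).det := by rw [hone, one_mul]
end
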